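/- There exists a constant C > 0 such that for every open bounded interval I ⊂ ℝ, every s ∈ (0,1), every u ∈ H^s(I), and every subinterval J ⊆ I with 2|J| ≥ |I|, one has ‖u‖_{L²(I)} ≤ C ( |I|^{-1/2} |∫_J u(x) dx| + |I|^s [u]_s(I) ), where [u]_s is the Gagliardo seminorm; here C may depend on s but not on I, J or u. -/

import Mathlib

/-!
With `K` the mean of `u` over `J`, write `u = K + (u - K)`. By Jensen, `(u x - K)²` is at most
the `J`-average of `(u x - u y)²`; enlarging `J` to `I` costs the factor `|I| / |J| ≤ 2`, and
since `|x - y| ≤ |I|` on `I × I`, the double integral of `(u x - u y)²` is at most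
`|I|^(1+2s) [u]_s²`.
-/

open MeasureTheory Set

/-- Squared Gagliardo seminorm of order `s` of `u` on the interval `(a,b)`. -/
noncomputable def gagliardoSq (s : ℝ) (a b : ℝ) (u : ℝ → ℝ) : ℝ :=
  ∫ x in Set.Ioo a b, ∫ y in Set.Ioo a b, (u x - u y) ^ 2 / |x - y| ^ (1 + 2 * s)

section

variable {α : Type*} [MeasurableSpace α] {μ ν : Measure α} {u : α → ℝ}

lemma sq_sub_average_le [IsFiniteMeasure ν] [NeZero ν] (hu : MemLp u 2 ν) (t : ℝ) :
    (t - ⨍ y, u y ∂ν) ^ 2 ≤ ⨍ y, (t - u y) ^ 2 ∂ν := by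
  have hsub : MemLp (fun y => t - u y) 2 ν := (memLp_const t).sub hu
  have hjensen := (even_two.convexOn_pow (𝕜 := ℝ)).map_average_le
    (continuous_pow 2).continuousOn isClosed_univ (ae_of_all _ fun _ => mem_univ _)
    (hsub.integrable one_le_two) hsub.integrable_sq
  rwa [average_eq, integral_sub (integrable_const t) (hu.integrable one_le_two), integral_const,
    smul_sub, smul_smul, inv_mul_cancel₀ measureReal_univ_ne_zero, one_smul, ← average_eq]
    at hjensen

lemma integrable_sq_sub_prod [IsFiniteMeasure μ] [IsFiniteMeasure ν] (hμ : MemLp u 2 μ)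
    (hν : MemLp u 2 ν) : Integrable (fun p : α × α => (u p.1 - u p.2) ^ 2) (μ.prod ν) := by
  have h := ((hμ.integrable_sq.mul_prod (integrable_const (1 : ℝ))).sub
    (((hμ.integrable one_le_two).mul_prod (hν.integrable one_le_two)).const_mul 2)).add
    ((integrable_const (1 : ℝ)).mul_prod hν.integrable_sq)
  exact h.congr (ae_of_all _ fun p => by simp only [Pi.add_apply, Pi.sub_apply]; ring)

theorem integral_sq_le_average_sq_add_integral_integral [IsFiniteMeasure μ] [NeZero ν]
    (hνμ : ν ≤ μ) (hu : MemLp u 2 μ) :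
    ∫ x, u x ^ 2 ∂μ ≤ 2 * μ.real univ * (⨍ y, u y ∂ν) ^ 2 +
      2 * (ν.real univ)⁻¹ * ∫ x, ∫ y, (u x - u y) ^ 2 ∂μ ∂μ := by
  have := isFiniteMeasure_of_le μ hνμ
  set K := ⨍ y, u y ∂ν
  have hpointwise (x : α) :
      u x ^ 2 ≤ 2 * K ^ 2 + 2 * (ν.real univ)⁻¹ * ∫ y, (u x - u y) ^ 2 ∂μ :=
    calc u x ^ 2 ≤ 2 * K ^ 2 + 2 * (u x - K) ^ 2 := by nlinarith [sq_nonneg (u x - 2 * K)]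
      _ ≤ 2 * K ^ 2 + 2 * ⨍ y, (u x - u y) ^ 2 ∂ν := by
        gcongr; exact sq_sub_average_le (hu.mono_measure hνμ) (u x)
      _ = 2 * K ^ 2 + 2 * (ν.real univ)⁻¹ * ∫ y, (u x - u y) ^ 2 ∂ν := by
        rw [average_eq, smul_eq_mul, mul_assoc]
      _ ≤ 2 * K ^ 2 + 2 * (ν.real univ)⁻¹ * ∫ y, (u x - u y) ^ 2 ∂μ := by
        gcongr
        · exact ae_of_all _ fun y => sq_nonneg _
        · exact ((memLp_const (u x)).sub hu).integrable_sq
  have hrhs : Integrable (fun x => ∫ y, (u x - u y) ^ 2 ∂μ) μ :=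
    (integrable_sq_sub_prod hu hu).integral_prod_left
  calc ∫ x, u x ^ 2 ∂μ
      ≤ ∫ x, (2 * K ^ 2 + 2 * (ν.real univ)⁻¹ * ∫ y, (u x - u y) ^ 2 ∂μ) ∂μ :=
        integral_mono hu.integrable_sq ((integrable_const _).add (hrhs.const_mul _)) hpointwise
    _ = _ := by
      rw [integral_add (integrable_const _) (hrhs.const_mul _), integral_const, smul_eq_mul,
        integral_const_mul]
      ring

end

lemma sq_sub_le_rpow_mul_div_abs_rpow (u : ℝ → ℝ) {x y L p : ℝ} (hp : 0 ≤ p)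
    (hxy : |x - y| ≤ L) : (u x - u y) ^ 2 ≤ L ^ p * ((u x - u y) ^ 2 / |x - y| ^ p) := by
  rcases eq_or_ne x y with rfl | hne
  · simp
  have hpos : 0 < |x - y| ^ p := Real.rpow_pos_of_pos (abs_sub_pos.mpr hne) p
  rw [mul_div_assoc', le_div_iff₀ hpos, mul_comm]
  gcongr

theorem integral_integral_sq_sub_le_rpow_mul_gagliardoSq {s a b : ℝ} {u : ℝ → ℝ}
    (hs : 0 ≤ 1 + 2 * s) (hu : MemLp u 2 (volume.restrict (Ioo a b)))
    (hg : IntegrableOn (fun p : ℝ × ℝ => (u p.1 - u p.2) ^ 2 / |p.1 - p.2| ^ (1 + 2 * s))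
      (Ioo a b ×ˢ Ioo a b) volume) :
    ∫ x in Ioo a b, ∫ y in Ioo a b, (u x - u y) ^ 2 ≤
      (b - a) ^ (1 + 2 * s) * gagliardoSq s a b u := by
  rw [Measure.volume_eq_prod] at hg
  have hF : IntegrableOn (fun p : ℝ × ℝ => (u p.1 - u p.2) ^ 2) (Ioo a b ×ˢ Ioo a b)
      (volume.prod volume) := by
    rw [IntegrableOn, ← Measure.prod_restrict]
    exact integrable_sq_sub_prod hu hu
  rw [gagliardoSq, ← setIntegral_prod _ hF, ← setIntegral_prod _ hg, ← integral_const_mul]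
  refine setIntegral_mono_on hF (hg.const_mul _) (measurableSet_Ioo.prod measurableSet_Ioo) ?_
  rintro ⟨x, y⟩ ⟨⟨hax, hxb⟩, ⟨hay, hyb⟩⟩
  exact sq_sub_le_rpow_mul_div_abs_rpow u hs (abs_sub_le_iff.mpr ⟨by linarith, by linarith⟩)

theorem integral_sq_Ioo_le_of_mean_and_gagliardoSq {s a b c d : ℝ} {u : ℝ → ℝ}
    (hs : 0 ≤ 1 + 2 * s) (hac : a ≤ c) (hcd : c < d) (hdb : d ≤ b)
    (hJ : b - a ≤ 2 * (d - c)) (hu : MemLp u 2 (volume.restrict (Ioo a b)))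
    (hg : IntegrableOn (fun p : ℝ × ℝ => (u p.1 - u p.2) ^ 2 / |p.1 - p.2| ^ (1 + 2 * s))
      (Ioo a b ×ˢ Ioo a b) volume) :
    ∫ x in Ioo a b, u x ^ 2 ≤ 8 * ((b - a) ^ (-(1:ℝ)/2) * |∫ x in Ioo c d, u x|) ^ 2 +
      4 * ((b - a) ^ s * √(gagliardoSq s a b u)) ^ 2 := by
  have : NeZero (volume.restrict (Ioo c d)) := ⟨by simp [hcd]⟩
  have hpoincare := integral_sq_le_average_sq_add_integral_integral
    (Measure.restrict_mono (Ioo_subset_Ioo hac hdb) le_rfl) hu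
  have hdouble := integral_integral_sq_sub_le_rpow_mul_gagliardoSq hs hu hg
  simp only [setAverage_eq, measureReal_restrict_apply_univ, smul_eq_mul,
    Real.volume_real_Ioo_of_le (hac.trans (hcd.le.trans hdb)), Real.volume_real_Ioo_of_le hcd.le]
    at hpoincare
  set L := b - a
  set l := d - c
  set m := ∫ x in Ioo c d, u x
  set G := gagliardoSq s a b u
  have hl : 0 < l := sub_pos.mpr hcd
  have hL : 0 < L := by linarith
  have hG : 0 ≤ G := integral_nonneg fun x => integral_nonneg fun y => by positivity
  have hinv : (L ^ (-(1:ℝ)/2)) ^ 2 = L⁻¹ := by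
    rw [← Real.rpow_natCast, ← Real.rpow_mul hL.le]
    norm_num [Real.rpow_neg_one]
  have hpow : L ^ (1 + 2 * s) = L * (L ^ s) ^ 2 := by
    rw [Real.rpow_add hL, Real.rpow_one, ← Real.rpow_natCast, ← Real.rpow_mul hL.le, mul_comm s]
    norm_num
  have hmean : 2 * L * (l⁻¹ * m) ^ 2 ≤ 8 * (L ^ (-(1:ℝ)/2) * |m|) ^ 2 := by
    rw [mul_pow, mul_pow, hinv, sq_abs]
    field_simp
    nlinarith [mul_le_mul_of_nonneg_right (pow_le_pow_left₀ hL.le hJ 2) (sq_nonneg m)]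
  have hseminorm : 2 * l⁻¹ * (L ^ (1 + 2 * s) * G) ≤ 4 * (L ^ s * √G) ^ 2 := by
    rw [mul_pow, Real.sq_sqrt hG, hpow]
    field_simp
    nlinarith [mul_nonneg (sq_nonneg (L ^ s)) hG]
  nlinarith [mul_le_mul_of_nonneg_left hdouble (by positivity : (0:ℝ) ≤ 2 * l⁻¹)]

/-- Poincaré-type estimate of the `L²` norm via the mean on a large
subinterval `J ⊆ I` (with `2|J| ≥ |I|`) and the Gagliardo `s`-seminorm. -/
theorem l2_bound_by_mean_and_seminorm (s : ℝ) (hs : s ∈ Set.Ioo (0:ℝ) 1) :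
    ∃ C : ℝ, 0 < C ∧ ∀ (a b c d : ℝ), a < b → a ≤ c → c < d → d ≤ b →
      b - a ≤ 2 * (d - c) →
      ∀ u : ℝ → ℝ, MemLp u 2 (volume.restrict (Set.Ioo a b)) →
        IntegrableOn
          (fun p : ℝ × ℝ => (u p.1 - u p.2) ^ 2 / |p.1 - p.2| ^ (1 + 2 * s))
          (Set.Ioo a b ×ˢ Set.Ioo a b) volume →
        Real.sqrt (∫ x in Set.Ioo a b, (u x) ^ 2) ≤
          C * ((b - a) ^ (-(1:ℝ)/2) * |∫ x in Set.Ioo c d, u x| +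
               (b - a) ^ s * Real.sqrt (gagliardoSq s a b u)) := by
  refine ⟨3, by norm_num, fun a b c d hab hac hcd hdb hJ u hu hg => ?_⟩
  have hsq :=
    integral_sq_Ioo_le_of_mean_and_gagliardoSq (by linarith [hs.1]) hac hcd hdb hJ hu hg
  have hL : 0 < b - a := sub_pos.mpr hab
  rw [Real.sqrt_le_left (by positivity)]
  nlinarith [mul_nonneg (Real.rpow_nonneg hL.le (-(1:ℝ)/2)) (abs_nonneg (∫ x in Ioo c d, u x)),
    mul_nonneg (Real.rpow_nonneg hL.le s) (Real.sqrt_nonneg (gagliardoSq s a b u))]
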